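/- arXiv:hep-th/9401042 — 3 statements merged into one kernel-verified Lean document; each statement's English description precedes it below -/
import Mathlib

section
/- The quasi Yang–Baxter equation R₁₂φ₃₁₂R₁₃φ₁₃₂⁻¹R₂₃φ = φ₃₂₁R₂₃φ₂₃₁⁻¹R₁₃φ₂₁₃R₁₂ holds in any quasi-triangular weak quasi-bialgebra. -/
open TensorProduct

noncomputable section

variable {A : Type*} [Ring A] [Algebra ℂ A]

/-- `Δ ⊗ id : A ⊗ A → A ⊗ (A ⊗ A)` (re-associated). -/
def coDid (Δ : A →ₗ[ℂ] A ⊗[ℂ] A) : A ⊗[ℂ] A →ₗ[ℂ] A ⊗[ℂ] (A ⊗[ℂ] A) :=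
  (TensorProduct.assoc ℂ A A A).toLinearMap ∘ₗ TensorProduct.map Δ LinearMap.id

/-- `id ⊗ Δ : A ⊗ A → A ⊗ (A ⊗ A)`. -/
def coidD (Δ : A →ₗ[ℂ] A ⊗[ℂ] A) : A ⊗[ℂ] A →ₗ[ℂ] A ⊗[ℂ] (A ⊗[ℂ] A) :=
  TensorProduct.map LinearMap.id Δ

/-- `id ⊗ id ⊗ Δ` on three tensor factors. -/
def coddD (Δ : A →ₗ[ℂ] A ⊗[ℂ] A) :
    A ⊗[ℂ] (A ⊗[ℂ] A) →ₗ[ℂ] A ⊗[ℂ] (A ⊗[ℂ] (A ⊗[ℂ] A)) :=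
  TensorProduct.map LinearMap.id (TensorProduct.map LinearMap.id Δ)

/-- `Δ ⊗ id ⊗ id` on three tensor factors (re-associated). -/
def coDdd (Δ : A →ₗ[ℂ] A ⊗[ℂ] A) :
    A ⊗[ℂ] (A ⊗[ℂ] A) →ₗ[ℂ] A ⊗[ℂ] (A ⊗[ℂ] (A ⊗[ℂ] A)) :=
  (TensorProduct.assoc ℂ A A (A ⊗[ℂ] A)).toLinearMap ∘ₗ
    TensorProduct.map Δ LinearMap.id

/-- `id ⊗ Δ ⊗ id` on three tensor factors (re-associated). -/
def codDd (Δ : A →ₗ[ℂ] A ⊗[ℂ] A) :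
    A ⊗[ℂ] (A ⊗[ℂ] A) →ₗ[ℂ] A ⊗[ℂ] (A ⊗[ℂ] (A ⊗[ℂ] A)) :=
  TensorProduct.map LinearMap.id
    ((TensorProduct.assoc ℂ A A A).toLinearMap ∘ₗ TensorProduct.map Δ LinearMap.id)

/-- `x ⊗ y ⊗ z ↦ x ⊗ y ⊗ z ⊗ e`: the embedding realizing `φ ⊗ e`. -/
def padRight3 : A ⊗[ℂ] (A ⊗[ℂ] A) →ₗ[ℂ] A ⊗[ℂ] (A ⊗[ℂ] (A ⊗[ℂ] A)) :=
  TensorProduct.map LinearMap.id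
    (TensorProduct.map LinearMap.id ((TensorProduct.mk ℂ A A).flip 1))

/-- Transposition of the first two of three tensor factors. -/
def perm12 : A ⊗[ℂ] (A ⊗[ℂ] A) →ₗ[ℂ] A ⊗[ℂ] (A ⊗[ℂ] A) :=
  (TensorProduct.assoc ℂ A A A).toLinearMap ∘ₗ
    TensorProduct.map (TensorProduct.comm ℂ A A).toLinearMap LinearMap.id ∘ₗ
    (TensorProduct.assoc ℂ A A A).symm.toLinearMap

/-- Transposition of the last two of three tensor factors. -/
def perm23 : A ⊗[ℂ] (A ⊗[ℂ] A) →ₗ[ℂ] A ⊗[ℂ] (A ⊗[ℂ] A) :=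
  TensorProduct.map LinearMap.id (TensorProduct.comm ℂ A A).toLinearMap

/-- `R ↦ R₁₂ = Σ r¹ ⊗ r² ⊗ e`. -/
def emb12 : A ⊗[ℂ] A →ₗ[ℂ] A ⊗[ℂ] (A ⊗[ℂ] A) :=
  TensorProduct.map LinearMap.id ((TensorProduct.mk ℂ A A).flip 1)

/-- `R ↦ R₁₃ = Σ r¹ ⊗ e ⊗ r²`. -/
def emb13 : A ⊗[ℂ] A →ₗ[ℂ] A ⊗[ℂ] (A ⊗[ℂ] A) :=
  TensorProduct.map LinearMap.id ((TensorProduct.mk ℂ A A) 1)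


/-!
The hexagon identity `(Δ ⊗ id)(R) = φ₃₁₂ R₁₃ φ₁₃₂⁻¹ R₂₃ φ` turns the left-hand side into
`R₁₂ (Δ ⊗ id)(R)`. The intertwining relation `R Δ(ξ) = Δ'(ξ) R`, applied in the first two
legs, moves `R₁₂` to the right at the cost of flipping those legs:
`R₁₂ (Δ ⊗ id)(R) = P₁₂((Δ ⊗ id)(R)) R₁₂`. Since `P₁₂` is an algebra automorphism, applying it
factorwise to the hexagon expression gives the right-hand side.
-/

def perm12AlgEquiv : A ⊗[ℂ] (A ⊗[ℂ] A) ≃ₐ[ℂ] A ⊗[ℂ] (A ⊗[ℂ] A) :=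
  (Algebra.TensorProduct.assoc ℂ ℂ ℂ A A A).symm.trans
    ((Algebra.TensorProduct.congr (Algebra.TensorProduct.comm ℂ A A) AlgEquiv.refl).trans
      (Algebra.TensorProduct.assoc ℂ ℂ ℂ A A A))

theorem perm12AlgEquiv_toLinearMap : (perm12AlgEquiv (A := A)).toLinearMap = perm12 := rfl

theorem perm12_mul (a b : A ⊗[ℂ] (A ⊗[ℂ] A)) : perm12 (a * b) = perm12 a * perm12 b := by
  simp only [← perm12AlgEquiv_toLinearMap, AlgEquiv.toLinearMap_apply, map_mul]

theorem perm12_assoc_tmul (u : A ⊗[ℂ] A) (y : A) :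
    perm12 (Algebra.TensorProduct.assoc ℂ ℂ ℂ A A A (u ⊗ₜ y)) =
      Algebra.TensorProduct.assoc ℂ ℂ ℂ A A A (TensorProduct.comm ℂ A A u ⊗ₜ y) := by
  simp only [← perm12AlgEquiv_toLinearMap, AlgEquiv.toLinearMap_apply, perm12AlgEquiv,
    AlgEquiv.trans_apply, AlgEquiv.symm_apply_apply, Algebra.TensorProduct.congr_apply,
    Algebra.TensorProduct.map_tmul]
  rfl

theorem perm12_emb13 (S : A ⊗[ℂ] A) : perm12 (emb13 S) = (1 : A) ⊗ₜ S := by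
  induction S using TensorProduct.induction_on with
  | zero => simp
  | add S S' h h' => simp only [map_add, TensorProduct.tmul_add, h, h']
  | tmul a b => simp [emb13, perm12]

theorem perm12_one_tmul (S : A ⊗[ℂ] A) : perm12 ((1 : A) ⊗ₜ S) = emb13 S := by
  induction S using TensorProduct.induction_on with
  | zero => simp
  | add S S' h h' => simp only [map_add, TensorProduct.tmul_add, h, h']
  | tmul a b => simp [emb13, perm12]

theorem emb12_eq_assoc (S : A ⊗[ℂ] A) :
    emb12 S = Algebra.TensorProduct.assoc ℂ ℂ ℂ A A A (S ⊗ₜ 1) := by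
  induction S using TensorProduct.induction_on with
  | zero => simp
  | add S S' h h' => simp only [map_add, TensorProduct.add_tmul, h, h']
  | tmul a b => simp [emb12]

theorem coDid_tmul (Δ : A →ₗ[ℂ] A ⊗[ℂ] A) (x y : A) :
    coDid Δ (x ⊗ₜ y) = Algebra.TensorProduct.assoc ℂ ℂ ℂ A A A (Δ x ⊗ₜ y) := rfl

theorem emb12_mul_coDid {Δ : A →ₗ[ℂ] A ⊗[ℂ] A} {R : A ⊗[ℂ] A}
    (hRint : ∀ ξ : A, R * Δ ξ = TensorProduct.comm ℂ A A (Δ ξ) * R) (T : A ⊗[ℂ] A) :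
    emb12 R * coDid Δ T = perm12 (coDid Δ T) * emb12 R := by
  induction T using TensorProduct.induction_on with
  | zero => simp
  | add T T' h h' => simp only [map_add, mul_add, add_mul, h, h']
  | tmul x y =>
    simp only [coDid_tmul, emb12_eq_assoc, perm12_assoc_tmul, ← map_mul,
      Algebra.TensorProduct.tmul_mul_tmul, mul_one, one_mul, hRint]

/-- In the paper's notation `φ₂₁₃ = perm12 φ`, `φ₁₃₂⁻¹ = perm23 φinv`,
`φ₃₁₂ = perm23 (perm12 φ)`, `φ₂₃₁⁻¹ = perm12 (perm23 φinv)`, `φ₃₂₁ = perm12 (perm23 (perm12 φ))`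
and `R₂₃ = 1 ⊗ₜ R`. -/
theorem quasi_yang_baxter_equation_general
    (Δ : A →ₗ[ℂ] A ⊗[ℂ] A)
    (φ φinv : A ⊗[ℂ] (A ⊗[ℂ] A))
    (R : A ⊗[ℂ] A)
    (hRint : ∀ ξ : A, R * Δ ξ = (TensorProduct.comm ℂ A A) (Δ ξ) * R)
    (hhex2 : coDid Δ R =
      perm23 (perm12 φ) * emb13 R * perm23 φinv * ((1 : A) ⊗ₜ[ℂ] R) * φ) :
    emb12 R * perm23 (perm12 φ) * emb13 R * perm23 φinv * ((1 : A) ⊗ₜ[ℂ] R) * φ =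
      perm12 (perm23 (perm12 φ)) * ((1 : A) ⊗ₜ[ℂ] R) * perm12 (perm23 φinv) *
        emb13 R * perm12 φ * emb12 R := by
  calc _ = emb12 R * coDid Δ R := by rw [hhex2]; simp only [mul_assoc]
    _ = perm12 (coDid Δ R) * emb12 R := emb12_mul_coDid hRint R
    _ = _ := by rw [hhex2]; simp only [perm12_mul, perm12_emb13, perm12_one_tmul]

/-- The quasi Yang–Baxter equation
`R₁₂ φ₃₁₂ R₁₃ φ₁₃₂⁻¹ R₂₃ φ = φ₃₂₁ R₂₃ φ₂₃₁⁻¹ R₁₃ φ₂₁₃ R₁₂`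
holds in any quasi-triangular weak quasi-bialgebra.  Here
`φ₂₁₃ = P₁₂φ`, `φ₁₃₂⁻¹ = P₂₃φ⁻¹`, `φ₃₁₂ = P₂₃P₁₂φ`, `φ₂₃₁⁻¹ = P₁₂P₂₃φ⁻¹`,
`φ₃₂₁ = P₁₂P₂₃P₁₂φ`, and `R₂₃ = e ⊗ R`. -/
theorem quasi_yang_baxter_equation
    (Δ : A →ₗ[ℂ] A ⊗[ℂ] A)
    (hΔ : ∀ x y : A, Δ (x * y) = Δ x * Δ y)
    (ε : A →ₐ[ℂ] ℂ)
    (hεl : ∀ ξ : A,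
      (TensorProduct.lid ℂ A) ((TensorProduct.map ε.toLinearMap LinearMap.id) (Δ ξ)) = ξ)
    (hεr : ∀ ξ : A,
      (TensorProduct.rid ℂ A) ((TensorProduct.map LinearMap.id ε.toLinearMap) (Δ ξ)) = ξ)
    (φ φinv : A ⊗[ℂ] (A ⊗[ℂ] A))
    (hqi1 : φ * φinv = coidD Δ (Δ 1))
    (hqi2 : φinv * φ = coDid Δ (Δ 1))
    (hφint : ∀ ξ : A, φ * coDid Δ (Δ ξ) = coidD Δ (Δ ξ) * φ)
    (hpent : coddD Δ φ * coDdd Δ φ =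
      ((1 : A) ⊗ₜ[ℂ] φ) * codDd Δ φ * padRight3 φ)
    (hmid : TensorProduct.map LinearMap.id
        ((TensorProduct.lid ℂ A).toLinearMap ∘ₗ
          TensorProduct.map ε.toLinearMap LinearMap.id) φ = Δ 1)
    (R Rinv : A ⊗[ℂ] A)
    (hR1 : R * Rinv = (TensorProduct.comm ℂ A A) (Δ 1))
    (hR2 : Rinv * R = Δ 1)
    (hRint : ∀ ξ : A, R * Δ ξ = (TensorProduct.comm ℂ A A) (Δ ξ) * R)
    (hhex1 : coidD Δ R =
      perm12 (perm23 φinv) * emb13 R * perm12 φ * emb12 R * φinv)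
    (hhex2 : coDid Δ R =
      perm23 (perm12 φ) * emb13 R * perm23 φinv * ((1 : A) ⊗ₜ[ℂ] R) * φ) :
    emb12 R * perm23 (perm12 φ) * emb13 R * perm23 φinv * ((1 : A) ⊗ₜ[ℂ] R) * φ =
      perm12 (perm23 (perm12 φ)) * ((1 : A) ⊗ₜ[ℂ] R) * perm12 (perm23 φinv) *
        emb13 R * perm12 φ * emb12 R :=
  quasi_yang_baxter_equation_general Δ φ φinv R hRint hhex2
end
end

section
/- The operators σᵢ = ρ^{i-1}(ε(ρ,ρ)) built from the statistics operator of a localized transportable endomorphism ρ satisfy the Artin braid relations: σᵢσₖ = σₖσᵢ for |i-k| ≥ 2 and σᵢσᵢ₊₁σᵢ = σᵢ₊₁σᵢσᵢ₊₁. -/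
/-! Both relations are images under `ρ^[i]` of relations between `u`, `ρ u` and `ρ^[2+j] u`:
far commutativity because `ρ^[2+j] u` lies in the range of `ρ ∘ ρ`, which `u` commutes with,
and the braid relation because it is the Yang–Baxter relation transported by `ρ^[i]`. -/

section IterateMulHom

variable {M F : Type*} [Mul M] [FunLike F M M] [MulHomClass F M M]

theorem Commute.iterate_map {x y : M} (h : Commute x y) (f : F) (n : ℕ) :
    Commute (f^[n] x) (f^[n] y) := by
  simpa only [Commute, SemiconjBy, ← iterate_map_mul] using congrArg f^[n] h

theorem commute_iterate_map_of_add_two_le (f : F) {u : M} (hu : ∀ a, Commute u (f (f a)))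
    {i k : ℕ} (hik : i + 2 ≤ k) : Commute (f^[i] u) (f^[k] u) := by
  obtain ⟨j, rfl⟩ := Nat.exists_eq_add_of_le hik
  rw [add_assoc, Function.iterate_add_apply, Function.iterate_add_apply]
  exact (hu _).iterate_map f i

theorem iterate_map_braid (f : F) {u : M} (hu : u * f u * u = f u * u * f u) (i : ℕ) :
    f^[i] u * f^[i + 1] u * f^[i] u = f^[i + 1] u * f^[i] u * f^[i + 1] u := by
  simpa only [iterate_map_mul, Function.iterate_succ_apply] using congrArg f^[i] hu

end IterateMulHom

theorem statistics_operators_satisfy_artin_relations_general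
    {A : Type*} [Ring A]
    (ρ : A →+* A) (u : A)
    (hint : ∀ a : A, u * ρ (ρ a) = ρ (ρ a) * u)
    (hybe : u * ρ u * u = ρ u * u * ρ u) :
    (∀ i k : ℕ, i + 2 ≤ k →
      (⇑ρ)^[i] u * (⇑ρ)^[k] u = (⇑ρ)^[k] u * (⇑ρ)^[i] u) ∧
    (∀ i : ℕ,
      (⇑ρ)^[i] u * (⇑ρ)^[i+1] u * (⇑ρ)^[i] u
        = (⇑ρ)^[i+1] u * (⇑ρ)^[i] u * (⇑ρ)^[i+1] u) :=
  ⟨fun _ _ hik => commute_iterate_map_of_add_two_le ρ hint hik, iterate_map_braid ρ hybe⟩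

/-- The operators `σᵢ = ρ^{i-1}(ε(ρ,ρ))` built from the
statistics operator `u = ε(ρ,ρ)` of a localized transportable endomorphism `ρ`
of the C*-algebra `A` of observables satisfy the Artin braid relations:
`σᵢσₖ = σₖσᵢ` for `|i-k| ≥ 2` and `σᵢσᵢ₊₁σᵢ = σᵢ₊₁σᵢσᵢ₊₁`.
Here we index from `0`, so `σ i := ρ^[i] u`.  The hypotheses are the
statistics-operator identities (epsprop): `u` is unitary, it intertwines
`ρ∘ρ` with itself (localized transportable endomorphisms at spacelike
distance commute), and the Yang–Baxter relation
`ε(ρ,ρ)ρ(ε(ρ,ρ))ε(ρ,ρ) = ρ(ε(ρ,ρ))ε(ρ,ρ)ρ(ε(ρ,ρ))` (which follows from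
`ε(ρ∘ρ,ρ) = ε(ρ,ρ)ρ(ε(ρ,ρ))` and `ε(ρ,ρ∘ρ) = ρ(ε(ρ,ρ))ε(ρ,ρ)`). -/
theorem statistics_operators_satisfy_artin_relations
    {A : Type*} [Ring A] [StarRing A]
    (ρ : A →+* A) (u : A)
    (huni : u * star u = 1 ∧ star u * u = 1)
    (hint : ∀ a : A, u * ρ (ρ a) = ρ (ρ a) * u)
    (hybe : u * ρ u * u = ρ u * u * ρ u) :
    (∀ i k : ℕ, i + 2 ≤ k →
      (⇑ρ)^[i] u * (⇑ρ)^[k] u = (⇑ρ)^[k] u * (⇑ρ)^[i] u) ∧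
    (∀ i : ℕ,
      (⇑ρ)^[i] u * (⇑ρ)^[i+1] u * (⇑ρ)^[i] u
        = (⇑ρ)^[i+1] u * (⇑ρ)^[i] u * (⇑ρ)^[i+1] u) :=
  statistics_operators_satisfy_artin_relations_general ρ u hint hybe
end

section
/- If the Clebsch–Gordan maps Cᵃ(IJ|K): Vᴵ⊗Vᴶ → Vᴷ satisfy the orthonormality Cᵃ(IJ|K)Cᵇ(IJ|L)* = δ_{K,L}δ_{a,b}e_K, then the coproduct Δ(ξ) = Σ Cᵃ(IJ|K)* ξ Cᵃ(IJ|K) is an algebra homomorphism: Δ(ξη) = Δ(ξ)Δ(η). -/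
open TensorProduct

/-!
Index the pairs `(K, a)` by a single sigma type, so that `Cₖ Dₗ = δₖₗ` for one family. Then
`Δ(ξ)Δ(η) = Σₖ Σₗ Dₖ ξₖ (Cₖ Dₗ) ηₗ Cₗ`, where only the diagonal terms survive, and these are
`Dₖ ξₖ ηₖ Cₖ`.
-/

namespace LinearMap

variable {R X : Type*} [CommSemiring R] [AddCommMonoid X] [Module R X]
  {κ : Type*} [Fintype κ] {Y : κ → Type*} [∀ k, AddCommMonoid (Y k)] [∀ k, Module R (Y k)]

theorem sum_comp_comp_mul_sum_comp_comp (C : ∀ k, X →ₗ[R] Y k) (D : ∀ k, Y k →ₗ[R] X)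
    (hCD : ∀ k, C k ∘ₗ D k = id) (hCD_ne : ∀ k l, k ≠ l → C k ∘ₗ D l = 0)
    (ξ η : ∀ k, Module.End R (Y k)) :
    (∑ k, D k ∘ₗ ξ k ∘ₗ C k) * (∑ k, D k ∘ₗ η k ∘ₗ C k) =
      ∑ k, D k ∘ₗ (ξ k * η k) ∘ₗ C k := by
  have hblock : ∀ k l, (D k ∘ₗ ξ k ∘ₗ C k) * (D l ∘ₗ η l ∘ₗ C l) =
      D k ∘ₗ ξ k ∘ₗ (C k ∘ₗ D l) ∘ₗ η l ∘ₗ C l := fun _ _ => rfl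
  rw [Fintype.sum_mul_sum]
  refine Finset.sum_congr rfl fun k _ => ?_
  rw [Fintype.sum_eq_single k fun l hlk => by
    rw [hblock, hCD_ne k l hlk.symm, zero_comp, comp_zero, comp_zero]]
  rw [hblock, hCD k]
  rfl

end LinearMap

theorem clebsch_gordan_coproduct_is_homomorphism_general
    {ι : Type*} [Fintype ι]
    (V : ι → Type*) [∀ i, AddCommGroup (V i)] [∀ i, Module ℂ (V i)]
    (N : ι → ι → ι → ℕ)
    (C : ∀ I J K : ι, Fin (N I J K) → (V I ⊗[ℂ] V J →ₗ[ℂ] V K))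
    (D : ∀ I J K : ι, Fin (N I J K) → (V K →ₗ[ℂ] V I ⊗[ℂ] V J))
    (h1 : ∀ (I J K : ι) (a b : Fin (N I J K)),
      C I J K a ∘ₗ D I J K b = if a = b then LinearMap.id else 0)
    (h2 : ∀ (I J K L : ι) (a : Fin (N I J K)) (b : Fin (N I J L)),
      K ≠ L → C I J K a ∘ₗ D I J L b = 0) :
    ∀ (ξ η : ∀ i, Module.End ℂ (V i)) (I J : ι),
      (∑ K, ∑ a, D I J K a ∘ₗ (ξ K * η K) ∘ₗ C I J K a) =
        (∑ K, ∑ a, D I J K a ∘ₗ ξ K ∘ₗ C I J K a) *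
        (∑ K, ∑ a, D I J K a ∘ₗ η K ∘ₗ C I J K a) := by
  intro ξ η I J
  have hCD_ne : ∀ p q : Σ K, Fin (N I J K), p ≠ q → C I J p.1 p.2 ∘ₗ D I J q.1 q.2 = 0 := by
    rintro ⟨K, a⟩ ⟨L, b⟩ hpq
    by_cases hKL : K = L
    · subst hKL
      exact (h1 I J K a b).trans (if_neg fun hab : a = b => hpq (hab ▸ rfl))
    · exact h2 I J K L a b hKL
  simp only [← Fintype.sum_sigma' (fun K a => D I J K a ∘ₗ _ ∘ₗ C I J K a)]
  exact (LinearMap.sum_comp_comp_mul_sum_comp_comp (κ := Σ K, Fin (N I J K))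
    (fun p => C I J p.1 p.2) (fun p => D I J p.1 p.2)
    (fun p => (h1 I J p.1 p.2 p.2).trans (if_pos rfl)) hCD_ne
    (fun p => ξ p.1) (fun p => η p.1)).symm

/-- If the Clebsch–Gordan maps `Cᵃ(IJ|K) : Vᴵ⊗Vᴶ → Vᴷ`
(together with their adjoints `D = C*`) satisfy the orthonormality
`Cᵃ(IJ|K)Cᵇ(IJ|L)* = δ_{K,L}δ_{a,b}e_K`, then the coproduct
`Δ(ξ) = Σ Cᵃ(IJ|K)* ξ Cᵃ(IJ|K)` (whose component on `Vᴵ ⊗ Vᴶ` is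
`Σ_{K,a} D ∘ ξ_K ∘ C`) is an algebra homomorphism: `Δ(ξη) = Δ(ξ)Δ(η)`.
Here `G*` is the algebra `Π I, End(Vᴵ)` of grade-preserving maps of
`V = ⊕ Vᴵ`. -/
theorem clebsch_gordan_coproduct_is_homomorphism
    {ι : Type*} [Fintype ι] [DecidableEq ι]
    (V : ι → Type*) [∀ i, AddCommGroup (V i)] [∀ i, Module ℂ (V i)]
    (N : ι → ι → ι → ℕ)
    (C : ∀ I J K : ι, Fin (N I J K) → (V I ⊗[ℂ] V J →ₗ[ℂ] V K))
    (D : ∀ I J K : ι, Fin (N I J K) → (V K →ₗ[ℂ] V I ⊗[ℂ] V J))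
    (h1 : ∀ (I J K : ι) (a b : Fin (N I J K)),
      C I J K a ∘ₗ D I J K b = if a = b then LinearMap.id else 0)
    (h2 : ∀ (I J K L : ι) (a : Fin (N I J K)) (b : Fin (N I J L)),
      K ≠ L → C I J K a ∘ₗ D I J L b = 0) :
    ∀ (ξ η : ∀ i, Module.End ℂ (V i)) (I J : ι),
      (∑ K, ∑ a, D I J K a ∘ₗ (ξ K * η K) ∘ₗ C I J K a) =
        (∑ K, ∑ a, D I J K a ∘ₗ ξ K ∘ₗ C I J K a) *
        (∑ K, ∑ a, D I J K a ∘ₗ η K ∘ₗ C I J K a) :=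
  clebsch_gordan_coproduct_is_homomorphism_general V N C D h1 h2
end
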